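/- Let 0 < r < 1 and let T be an invertible bounded operator in C_{1,r} on a complex Hilbert space H. For k ∈ ℕ and multi-indices n = (n₁,…,n_k), m = (m₁,…,m_k) with nonnegative integer entries, write p_{k,nm}(T) = T^{n₁}T*^{m₁}⋯T^{n_k}T*^{m_k}. Then the maximal closed subspace of H reducing T on which T restricts to an operator of class 𝒞_{1,r} equals the set { x ∈ H : (1+r²)‖p_{k,nm}(T)x‖² − ‖T p_{k,nm}(T)x‖² − r²‖T⁻* p_{k,nm}(T)x‖² = 0 for all k ∈ ℕ and all nonnegative integer multi-indices n, m of length k }. -/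

import Mathlib

/-!
Put `P = T T*`. The norm conditions `‖T‖ ≤ 1` and `‖r T⁻¹‖ ≤ 1` say `r² ≤ P ≤ 1`, so the
defect operator `D = (1 + r²) - T*T - r² T⁻¹T⁻*` factors as
`D = T⁻¹ (1 - P)(P - r²) T⁻*` with commuting nonnegative middle factors, hence `D ≥ 0`.
The quadratic form of `D` is `(1 + r²)‖x‖² - ‖Tx‖² - r²‖T⁻*x‖²`, and for a positive operator
`⟪Dx, x⟫ = 0` forces `Dx = 0`. So the vectors in the set of the theorem are those `x` with
`D p(T) x = 0` for every word `p(T)` in `T` and `T*`: an intersection of kernels, hence a closed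
subspace, invariant under `T` and `T*` because words can be extended by one letter, and
containing every reducing subspace on which the quadratic form vanishes.
-/

open ContinuousLinearMap

variable {H : Type*} [NormedAddCommGroup H] [InnerProductSpace ℂ H] [CompleteSpace H]

/-- `T ∈ C_{1,r}`: `T` is invertible, `‖T‖ ≤ 1` and `‖r • T⁻¹‖ ≤ 1`. -/
def MemC1r (r : ℝ) (T : H →L[ℂ] H) : Prop :=
  IsUnit T ∧ ‖T‖ ≤ 1 ∧ ‖(r : ℂ) • Ring.inverse T‖ ≤ 1

/-- A closed subspace `L` reduces `T` if `L` is invariant under both `T` and `T*`. -/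
def Reduces (T : H →L[ℂ] H) (L : Submodule ℂ H) : Prop :=
  ∀ x ∈ L, T x ∈ L ∧ adjoint T x ∈ L

/-- `T` restricted to `L` is of class `𝒞_{1,r}`:
`(1+r²)‖x‖² = ‖Tx‖² + r²‖T⁻*x‖²` for all `x ∈ L`. -/
def RestrictedScriptC1r (r : ℝ) (T : H →L[ℂ] H) (L : Submodule ℂ H) : Prop :=
  ∀ x ∈ L, (1 + r ^ 2) * ‖x‖ ^ 2 = ‖T x‖ ^ 2 + r ^ 2 * ‖adjoint (Ring.inverse T) x‖ ^ 2

/-- `p_{k,nm}(T) = T^{n₁}T*^{m₁}⋯T^{n_k}T*^{m_k}`. -/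
noncomputable def pknm (T : H →L[ℂ] H) {k : ℕ} (n m : Fin k → ℕ) : H →L[ℂ] H :=
  ((List.finRange k).map fun i => T ^ n i * (adjoint T) ^ m i).prod

section Defect

variable {A : Type*}

noncomputable def c1rDefect [Ring A] [StarRing A] [Algebra ℝ A] (r : ℝ) (a : A) : A :=
  algebraMap ℝ A (1 + r ^ 2) - star a * a -
    algebraMap ℝ A (r ^ 2) * (Ring.inverse a * star (Ring.inverse a))

theorem c1rDefect_eq_conjugate [Ring A] [StarRing A] [Algebra ℝ A] (r : ℝ) {a : A}
    (ha : IsUnit a) :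
    c1rDefect r a = Ring.inverse a *
      ((1 - a * star a) * (a * star a - algebraMap ℝ A (r ^ 2))) * star (Ring.inverse a) := by
  rw [c1rDefect, map_add, map_one]
  set b := Ring.inverse a
  have hba : b * a = 1 := Ring.inverse_mul_cancel a ha
  have hab : star a * star b = 1 := by simpa using congrArg star hba
  have cancel : ∀ x : A, b * (a * x) = x := fun x => by rw [← mul_assoc, hba, one_mul]
  simp only [mul_sub, sub_mul, one_mul, mul_one, mul_assoc, Algebra.left_comm, cancel, hab]
  abel

variable [CStarAlgebra A] [PartialOrder A] [StarOrderedRing A]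

theorem mul_star_le_one_of_norm_le_one {a : A} (h : ‖a‖ ≤ 1) : a * star a ≤ 1 :=
  calc a * star a ≤ algebraMap ℝ A (‖a‖ ^ 2) := CStarAlgebra.mul_star_le_algebraMap_norm_sq
    _ ≤ algebraMap ℝ A 1 := algebraMap_mono A (pow_le_one₀ (norm_nonneg a) h)
    _ = 1 := map_one _

theorem algebraMap_sq_le_mul_star {r : ℝ} {a : A} (ha : IsUnit a)
    (h : ‖(r : ℂ) • Ring.inverse a‖ ≤ 1) : algebraMap ℝ A (r ^ 2) ≤ a * star a := by
  set b := Ring.inverse a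
  have hab : a * b = 1 := Ring.mul_inverse_cancel a ha
  have hb : algebraMap ℝ A (r ^ 2) * (b * star b) ≤ 1 := by
    have := mul_star_le_one_of_norm_le_one h
    rwa [star_smul, smul_mul_smul, Complex.star_def, Complex.conj_ofReal, ← Complex.ofReal_mul,
      ← sq, Complex.coe_smul, Algebra.smul_def] at this
  calc algebraMap ℝ A (r ^ 2) = algebraMap ℝ A (r ^ 2) * ((a * b) * star (a * b)) := by
        rw [hab, star_one, mul_one, mul_one]
    _ = a * (algebraMap ℝ A (r ^ 2) * (b * star b)) * star a := by
        simp only [star_mul, mul_assoc, Algebra.left_comm]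
    _ ≤ a * 1 * star a := star_right_conjugate_le_conjugate hb a
    _ = a * star a := by rw [mul_one]

theorem c1rDefect_nonneg {r : ℝ} {a : A} (ha : IsUnit a) (h₁ : ‖a‖ ≤ 1)
    (h₂ : ‖(r : ℂ) • Ring.inverse a‖ ≤ 1) : 0 ≤ c1rDefect r a := by
  set P := a * star a
  have hcomm : Commute (1 - P) (P - algebraMap ℝ A (r ^ 2)) :=
    ((Commute.one_left P).sub_left (Commute.refl P)).sub_right
      (Algebra.commute_algebraMap_right _ _)
  rw [c1rDefect_eq_conjugate r ha]
  exact star_right_conjugate_nonneg (hcomm.mul_nonneg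
    (sub_nonneg.mpr (mul_star_le_one_of_norm_le_one h₁))
    (sub_nonneg.mpr (algebraMap_sq_le_mul_star ha h₂))) _

end Defect

open scoped InnerProductSpace

theorem ContinuousLinearMap.apply_eq_zero_iff_inner_map_self_eq_zero_of_nonneg {D : H →L[ℂ] H}
    (hD : 0 ≤ D) (x : H) : D x = 0 ↔ ⟪D x, x⟫_ℂ = 0 := by
  obtain ⟨S, rfl⟩ := CStarAlgebra.nonneg_iff_eq_star_mul_self.mp hD
  have hS : ⟪(star S * S) x, x⟫_ℂ = ⟪S x, S x⟫_ℂ := by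
    rw [star_eq_adjoint, mul_apply_eq_comp, adjoint_inner_left]
  refine ⟨fun h => by rw [h, inner_zero_left], fun h => ?_⟩
  rw [hS, inner_self_eq_zero] at h
  rw [mul_apply_eq_comp, h, map_zero]

theorem inner_c1rDefect_apply_self (r : ℝ) (T : H →L[ℂ] H) (x : H) :
    ⟪c1rDefect r T x, x⟫_ℂ = (((1 + r ^ 2) * ‖x‖ ^ 2 - ‖T x‖ ^ 2 -
      r ^ 2 * ‖adjoint (Ring.inverse T) x‖ ^ 2 : ℝ) : ℂ) := by
  have hT : ⟪star T (T x), x⟫_ℂ = (‖T x‖ : ℂ) ^ 2 := by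
    rw [star_eq_adjoint, adjoint_inner_left, inner_self_eq_norm_sq_to_K]; rfl
  have hS : ⟪Ring.inverse T (star (Ring.inverse T) x), x⟫_ℂ =
      (‖adjoint (Ring.inverse T) x‖ : ℂ) ^ 2 := by
    rw [star_eq_adjoint, ← adjoint_inner_right, inner_self_eq_norm_sq_to_K]; rfl
  simp only [c1rDefect, sub_apply, mul_apply_eq_comp, ContinuousLinearMap.algebraMap_apply,
    inner_sub_left, ← Complex.coe_smul, inner_smul_left, Complex.conj_ofReal,
    inner_self_eq_norm_sq_to_K, hT, hS, RCLike.ofReal_eq_complex_ofReal]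
  push_cast
  ring

theorem MemC1r.c1rDefect_apply_eq_zero_iff {r : ℝ} {T : H →L[ℂ] H} (hT : MemC1r r T) (x : H) :
    c1rDefect r T x = 0 ↔
      (1 + r ^ 2) * ‖x‖ ^ 2 - ‖T x‖ ^ 2 - r ^ 2 * ‖adjoint (Ring.inverse T) x‖ ^ 2 = 0 := by
  rw [apply_eq_zero_iff_inner_map_self_eq_zero_of_nonneg (c1rDefect_nonneg hT.1 hT.2.1 hT.2.2),
    inner_c1rDefect_apply_self, Complex.ofReal_eq_zero]

theorem pknm_zero (T : H →L[ℂ] H) (n m : Fin 0 → ℕ) : pknm T n m = 1 := by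
  simp [pknm]

theorem pknm_snoc (T : H →L[ℂ] H) {k : ℕ} (n m : Fin k → ℕ) (a b : ℕ) :
    pknm T (Fin.snoc n a) (Fin.snoc m b) = pknm T n m * (T ^ a * adjoint T ^ b) := by
  simp [pknm, List.finRange_succ_last, Function.comp_def]

theorem Reduces.pknm_apply_mem {T : H →L[ℂ] H} {L : Submodule ℂ H} (hL : Reduces T L) {k : ℕ}
    (n m : Fin k → ℕ) {x : H} (hx : x ∈ L) : pknm T n m x ∈ L := by
  let M : Submonoid (H →L[ℂ] H) :=
    { carrier := {S | ∀ y ∈ L, S y ∈ L}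
      mul_mem' := fun hS hS' y hy => hS _ (hS' y hy)
      one_mem' := fun _ hy => hy }
  have hT : T ∈ M := fun y hy => (hL y hy).1
  have hT' : adjoint T ∈ M := fun y hy => (hL y hy).2
  refine M.list_prod_mem (fun S hS => ?_) x hx
  obtain ⟨i, -, rfl⟩ := List.mem_map.mp hS
  exact M.mul_mem (M.pow_mem hT _) (M.pow_mem hT' _)

noncomputable def c1rSubspace (r : ℝ) (T : H →L[ℂ] H) : Submodule ℂ H :=
  ⨅ (k : ℕ) (n : Fin k → ℕ) (m : Fin k → ℕ), (c1rDefect r T * pknm T n m).ker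

theorem mem_c1rSubspace {r : ℝ} {T : H →L[ℂ] H} {x : H} :
    x ∈ c1rSubspace r T ↔ ∀ (k : ℕ) (n m : Fin k → ℕ), c1rDefect r T (pknm T n m x) = 0 := by
  simp [c1rSubspace, Submodule.mem_iInf]

theorem isClosed_c1rSubspace (r : ℝ) (T : H →L[ℂ] H) : IsClosed (c1rSubspace r T : Set H) := by
  simp only [c1rSubspace, Submodule.coe_iInf]
  exact isClosed_iInter fun k => isClosed_iInter fun n => isClosed_iInter fun m => isClosed_ker _

theorem reduces_c1rSubspace (r : ℝ) (T : H →L[ℂ] H) : Reduces T (c1rSubspace r T) := by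
  intro x hx
  rw [mem_c1rSubspace] at hx
  constructor <;> rw [mem_c1rSubspace] <;> intro k n m
  · simpa [pknm_snoc] using hx (k + 1) (Fin.snoc n 1) (Fin.snoc m 0)
  · simpa [pknm_snoc] using hx (k + 1) (Fin.snoc n 0) (Fin.snoc m 1)

theorem MemC1r.restrictedScriptC1r_c1rSubspace {r : ℝ} {T : H →L[ℂ] H} (hT : MemC1r r T) :
    RestrictedScriptC1r r T (c1rSubspace r T) := by
  intro x hx
  have h := mem_c1rSubspace.mp hx 0 Fin.elim0 Fin.elim0
  rw [pknm_zero, one_apply_eq_self, hT.c1rDefect_apply_eq_zero_iff] at h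
  linarith

theorem MemC1r.le_c1rSubspace {r : ℝ} {T : H →L[ℂ] H} (hT : MemC1r r T) {L : Submodule ℂ H}
    (hL : Reduces T L) (hLr : RestrictedScriptC1r r T L) : L ≤ c1rSubspace r T := by
  refine fun x hx => mem_c1rSubspace.mpr fun k n m => ?_
  rw [hT.c1rDefect_apply_eq_zero_iff]
  linarith [hLr _ (hL.pknm_apply_mem n m hx)]

theorem stmt13_general (r : ℝ) (T : H →L[ℂ] H)
    (hmem : MemC1r r T) :
    ∃ H₁ : Submodule ℂ H, IsClosed (H₁ : Set H) ∧ Reduces T H₁ ∧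
      RestrictedScriptC1r r T H₁ ∧
      (∀ L : Submodule ℂ H, IsClosed (L : Set H) → Reduces T L →
        RestrictedScriptC1r r T L → L ≤ H₁) ∧
      (H₁ : Set H) = {x : H | ∀ (k : ℕ) (n m : Fin k → ℕ),
        (1 + r ^ 2) * ‖pknm T n m x‖ ^ 2 - ‖T (pknm T n m x)‖ ^ 2 -
          r ^ 2 * ‖adjoint (Ring.inverse T) (pknm T n m x)‖ ^ 2 = 0} := by
  refine ⟨c1rSubspace r T, isClosed_c1rSubspace r T, reduces_c1rSubspace r T,
    hmem.restrictedScriptC1r_c1rSubspace, fun L _ hL hLr => hmem.le_c1rSubspace hL hLr, ?_⟩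
  ext x
  simp only [SetLike.mem_coe, mem_c1rSubspace, Set.mem_ofPred_eq, hmem.c1rDefect_apply_eq_zero_iff]

theorem stmt13 (r : ℝ) (hr0 : 0 < r) (hr1 : r < 1) (T : H →L[ℂ] H) (hT : IsUnit T)
    (hmem : MemC1r r T) :
    ∃ H₁ : Submodule ℂ H, IsClosed (H₁ : Set H) ∧ Reduces T H₁ ∧
      RestrictedScriptC1r r T H₁ ∧
      (∀ L : Submodule ℂ H, IsClosed (L : Set H) → Reduces T L →
        RestrictedScriptC1r r T L → L ≤ H₁) ∧
      (H₁ : Set H) = {x : H | ∀ (k : ℕ) (n m : Fin k → ℕ),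
        (1 + r ^ 2) * ‖pknm T n m x‖ ^ 2 - ‖T (pknm T n m x)‖ ^ 2 -
          r ^ 2 * ‖adjoint (Ring.inverse T) (pknm T n m x)‖ ^ 2 = 0} :=
  stmt13_general r T hmem
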